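/- arXiv:2308.10600 — 4 statements merged into one kernel-verified Lean document; each statement's English description precedes it below -/
import Mathlib

section
/- Let G be a finite simple graph with a b-bend β-restricted RAC drawing δ, let u ≠ v be vertices of G, and let T be the set of vertices t of G whose neighborhood is exactly {u, v}. Let T′ ⊆ T be the set of those t ∈ T such that both edges ut and vt have no bends in δ. Then the number of vertices t ∈ T′ such that a segment of one of the two edges of t shares a relative-interior point with a segment of an edge of some other vertex t′ ∈ T′ is at most 4. -/
noncomputable section

abbrev Pt : Type := EuclideanSpace ℝ (Fin 2)

/-- The list of consecutive endpoint pairs (straight-line segments) of the polyline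
going from `a` through the bend points in `l` to `b`. -/
def segList (a b : Pt) (l : List Pt) : List (Pt × Pt) :=
  ((a :: l) ++ [b]).zip (l ++ [b])

/-- The closed straight-line segment determined by a pair of points. -/
def SegC (s : Pt × Pt) : Set Pt := segment ℝ s.1 s.2

/-- The relative interior of the straight-line segment determined by a pair of points. -/
def SegI (s : Pt × Pt) : Set Pt := openSegment ℝ s.1 s.2

/-- A polyline RAC drawing of a simple graph `G`. -/
structure PolyRAC {V : Type*} (G : SimpleGraph V) where
  pos : V → Pt
  pos_inj : Function.Injective pos
  bends : ∀ u v : V, G.Adj u v → List Pt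
  bends_symm : ∀ u v (h : G.Adj u v), bends v u h.symm = (bends u v h).reverse
  consec_meet : ∀ u v (h : G.Adj u v),
    ∀ i j : Fin (segList (pos u) (pos v) (bends u v h)).length, (j : ℕ) = (i : ℕ) + 1 →
      SegC ((segList (pos u) (pos v) (bends u v h)).get i) ∩
        SegC ((segList (pos u) (pos v) (bends u v h)).get j) =
        {((segList (pos u) (pos v) (bends u v h)).get i).2}
  consec_not_collinear : ∀ u v (h : G.Adj u v),
    ∀ i j : Fin (segList (pos u) (pos v) (bends u v h)).length, (j : ℕ) = (i : ℕ) + 1 →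
      ¬ Collinear ℝ {((segList (pos u) (pos v) (bends u v h)).get i).1,
          ((segList (pos u) (pos v) (bends u v h)).get i).2,
          ((segList (pos u) (pos v) (bends u v h)).get j).2}
  nonconsec_disjoint : ∀ u v (h : G.Adj u v),
    ∀ i j : Fin (segList (pos u) (pos v) (bends u v h)).length, (i : ℕ) + 1 < (j : ℕ) →
      SegC ((segList (pos u) (pos v) (bends u v h)).get i) ∩
        SegC ((segList (pos u) (pos v) (bends u v h)).get j) = ∅
  no_vertex_interior : ∀ (w u v : V) (h : G.Adj u v), w ≠ u → w ≠ v →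
      ∀ s ∈ segList (pos u) (pos v) (bends u v h), pos w ∉ SegI s
  rac : ∀ (u v x y : V) (h₁ : G.Adj u v) (h₂ : G.Adj x y),
      Sym2.mk u v ≠ Sym2.mk x y →
      ∀ s ∈ segList (pos u) (pos v) (bends u v h₁),
        ∀ s' ∈ segList (pos x) (pos y) (bends x y h₂),
          ∀ q : Pt, q ∈ SegI s → q ∈ SegI s' → (inner ℝ (s.2 - s.1) (s'.2 - s'.1) : ℝ) = 0

/-- The drawing `d` is a `b`-bend `β`-restricted RAC drawing: every edge `e` has at most
`β e` bends and the total number of bends over all edges is at most `b`. -/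
def PolyRAC.Restricted {V : Type*} [Fintype V] [DecidableEq V] {G : SimpleGraph V}
    (d : PolyRAC G) (b : ℕ) (β : Sym2 V → ℕ) : Prop :=
  (∀ u v (h : G.Adj u v), (d.bends u v h).length ≤ β (Sym2.mk u v)) ∧
  ∃ count : Sym2 V → ℕ,
    (∀ u v (h : G.Adj u v), count (Sym2.mk u v) = (d.bends u v h).length) ∧
    (∀ e, e ∉ G.edgeSet → count e = 0) ∧
    ∑ e : Sym2 V, count e ≤ b

/-- `G` admits a `b`-bend `β`-restricted RAC drawing. -/
def AdmitsBRAC {V : Type*} [Fintype V] [DecidableEq V] (G : SimpleGraph V)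
    (b : ℕ) (β : Sym2 V → ℕ) : Prop :=
  ∃ d : PolyRAC G, d.Restricted b β

end


section Aux

private lemma inner2 (x y : Pt) : (inner ℝ x y : ℝ) = x 0 * y 0 + x 1 * y 1 := by
  simp [PiLp.inner_apply, Fin.sum_univ_two, RCLike.inner_apply, conj_trivial]
  ring

private lemma subSeg (x y q : Pt) (s : ℝ) (hq : q ∈ openSegment ℝ x y) (h0 : 0 < s)
    (h1 : s < 1) : x + s • (q - x) ∈ openSegment ℝ x y := by
  rw [openSegment_eq_image'] at hq ⊢
  obtain ⟨θ, hθ, rfl⟩ := hq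
  refine ⟨s*θ, ⟨mul_pos h0 hθ.1, ?_⟩, ?_⟩
  · nlinarith [hθ.2, hθ.1]
  · simp [add_sub_cancel_left, smul_smul]

private lemma segList_nil (a b : Pt) : segList a b [] = [(a, b)] := rfl

private lemma mem_openSegment_ne_left (x y q : Pt) (h : x ≠ y)
    (hq : q ∈ openSegment ℝ x y) : q ≠ x := by
  intro he
  rw [he] at hq
  exact h (left_mem_openSegment_iff.1 hq)

private lemma openSegment_vsub (x y q : Pt) (hq : q ∈ openSegment ℝ x y) :
    ∃ θ : ℝ, 0 < θ ∧ θ < 1 ∧ q - x = θ • (y - x) := by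
  rw [openSegment_eq_image'] at hq
  obtain ⟨θ, hθ, rfl⟩ := hq
  exact ⟨θ, hθ.1, hθ.2, by simp⟩

set_option maxHeartbeats 800000 in
private lemma chordSolve (c0 c1 e10 e11 e20 e21 : ℝ)
    (hC : 0 < c0^2+c1^2)
    (hA : 0 < e10^2+e11^2) (hB : 0 < e20^2+e21^2)
    (hΔ : (e10*e21 - e11*e20)*(c0^2+c1^2) =
      (c0*e11-c1*e10)*(e20^2+e21^2) + (c0*e21-c1*e20)*(e10^2+e11^2))
    (hside : (c0*e11-c1*e10)*(c0*e21-c1*e20) > 0)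
    (hX : (c0*e11-c1*e10) *
      ((c0*e21-c1*e20)*((c0^2+c1^2)-(e10^2+e11^2)) - (c0*e11-c1*e10)*(e20^2+e21^2)) < 0)
    (hY : (c0*e11-c1*e10) *
      ((c0*e11-c1*e10)*((c0^2+c1^2)-(e20^2+e21^2)) - (c0*e21-c1*e20)*(e10^2+e11^2)) < 0) :
    ∃ s r : ℝ, 0<s ∧ s<1 ∧ 0<r ∧ r<1 ∧ s*e10 = c0 + r*e20 ∧ s*e11 = c1 + r*e21 := by
  set d1 := c0*e11-c1*e10 with hd1def
  set d2 := c0*e21-c1*e20 with hd2def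
  set δ := e10*e21 - e11*e20 with hδdef
  set C := c0^2+c1^2 with hCdef
  set A := e10^2+e11^2 with hAdef
  set B := e20^2+e21^2 with hBdef
  have key0 : d2 * e10 - d1 * e20 = c0 * δ := by rw [hd1def, hd2def, hδdef]; ring
  have key1 : d2 * e11 - d1 * e21 = c1 * δ := by rw [hd1def, hd2def, hδdef]; ring
  clear_value d1 d2 δ C A B
  have hposC : ∀ x : ℝ, 0 < x*C → 0 < x := by
    intro x h; by_contra hc; push_neg at hc; nlinarith
  have hltC : ∀ x y : ℝ, x * C < y * C → x < y := by
    intro x y h; by_contra hc; push_neg at hc; nlinarith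
  rcases mul_pos_iff.1 hside with ⟨h1,h2⟩ | ⟨h1,h2⟩
  · -- d1 > 0, d2 > 0
    have hXq : d2*(C-A) - d1*B < 0 := by
      rcases mul_neg_iff.1 hX with ⟨hp, hq⟩ | ⟨hp, hq⟩
      · exact hq
      · exact absurd h1 (not_lt.2 hp.le)
    have hYq : d1*(C-B) - d2*A < 0 := by
      rcases mul_neg_iff.1 hY with ⟨hp, hq⟩ | ⟨hp, hq⟩
      · exact hq
      · exact absurd h1 (not_lt.2 hp.le)
    have hδpos : 0 < δ := by
      refine hposC δ ?_
      have hb := mul_pos h1 hB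
      have ha := mul_pos h2 hA
      linarith [hΔ]
    have hδne : δ ≠ 0 := ne_of_gt hδpos
    have hs : d2 < δ := by
      refine hltC _ _ ?_
      have : d2*(C-A) < d1*B := by linarith
      nlinarith [hΔ]
    have hr : d1 < δ := by
      refine hltC _ _ ?_
      have : d1*(C-B) < d2*A := by linarith
      nlinarith [hΔ]
    refine ⟨d2/δ, d1/δ, div_pos h2 hδpos, (div_lt_one hδpos).2 hs,
      div_pos h1 hδpos, (div_lt_one hδpos).2 hr, ?_, ?_⟩
    · have : d2/δ * e10 - d1/δ * e20 = c0 := by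
        field_simp
        linarith [key0]
      linarith
    · have : d2/δ * e11 - d1/δ * e21 = c1 := by
        field_simp
        linarith [key1]
      linarith
  · -- d1 < 0, d2 < 0
    have hXq : d2*(C-A) - d1*B > 0 := by
      rcases mul_neg_iff.1 hX with ⟨hp, hq⟩ | ⟨hp, hq⟩
      · exact absurd h1 (not_lt.2 hp.le)
      · exact hq
    have hYq : d1*(C-B) - d2*A > 0 := by
      rcases mul_neg_iff.1 hY with ⟨hp, hq⟩ | ⟨hp, hq⟩
      · exact absurd h1 (not_lt.2 hp.le)
      · exact hq
    have hδneg : δ < 0 := by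
      have : 0 < (-δ) := by
        refine hposC _ ?_
        have hb := mul_pos_of_neg_of_neg h1 (by linarith : -B < 0)
        have ha := mul_pos_of_neg_of_neg h2 (by linarith : -A < 0)
        nlinarith [hΔ]
      linarith
    have hδne : δ ≠ 0 := ne_of_lt hδneg
    have hs : δ < d2 := by
      refine hltC _ _ ?_
      have : d1*B < d2*(C-A) := by linarith
      nlinarith [hΔ]
    have hr : δ < d1 := by
      refine hltC _ _ ?_
      have : d2*A < d1*(C-B) := by linarith
      nlinarith [hΔ]
    refine ⟨d2/δ, d1/δ, div_pos_of_neg_of_neg h2 hδneg,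
      (div_lt_one_iff).2 (Or.inr (Or.inr ⟨hδneg, hs⟩)),
      div_pos_of_neg_of_neg h1 hδneg,
      (div_lt_one_iff).2 (Or.inr (Or.inr ⟨hδneg, hr⟩)), ?_, ?_⟩
    · have : d2/δ * e10 - d1/δ * e20 = c0 := by
        field_simp
        linarith [key0]
      linarith
    · have : d2/δ * e11 - d1/δ * e21 = c1 := by
        field_simp
        linarith [key1]
      linarith

set_option maxHeartbeats 1600000 in
private lemma chordCross (c0 c1 e10 e11 e20 e21 : ℝ)
    (hA : 0 < e10^2+e11^2)
    (hA' : e10^2+e11^2 < c0^2+c1^2)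
    (hB : 0 < e20^2+e21^2)
    (hB' : e20^2+e21^2 < c0^2+c1^2)
    (h1 : e10*(e10-c0) + e11*(e11-c1) = 0)
    (h2 : (e20+c0)*e20 + (e21+c1)*e21 = 0)
    (hne : 0 < (e10-e20-c0)^2 + (e11-e21-c1)^2)
    (hside : (c0*e11 - c1*e10) * (c0*e21 - c1*e20) > 0) :
    (∃ s r : ℝ, 0 < s ∧ s < 1 ∧ 0 < r ∧ r < 1 ∧
       s*e10 = c0 + r*e20 ∧ s*e11 = c1 + r*e21) ∨
    (∃ s r : ℝ, 0 < s ∧ s < 1 ∧ 0 < r ∧ r < 1 ∧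
       s*(e20+c0) = c0 + r*(e10-c0) ∧ s*(e21+c1) = c1 + r*(e11-c1)) := by
  have hC : 0 < c0^2+c1^2 := lt_trans hA hA'
  -- basic inner product values
  have hcA : c0*e10 + c1*e11 = e10^2+e11^2 := by linear_combination -h1
  have hcB : c0*e20 + c1*e21 = -(e20^2+e21^2) := by linear_combination h2
  set d1 := c0*e11-c1*e10 with hd1def
  set d2 := c0*e21-c1*e20 with hd2def
  set C := c0^2+c1^2 with hCdef
  set A := e10^2+e11^2 with hAdef
  set B := e20^2+e21^2 with hBdef
  -- key identities
  have hΔid : (e10*e21 - e11*e20)*C = d1*B + d2*A := by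
    rw [hd1def, hd2def, hCdef, hAdef, hBdef]
    linear_combination (-(c0*e21-c1*e20)) * h1 + (-(c0*e11-c1*e10)) * h2
  have hd1sq : d1^2 = A*(C-A) := by
    rw [hd1def, hCdef, hAdef]
    nlinarith [hcA, sq_nonneg (c0*e10+c1*e11)]
  have hd2sq : d2^2 = B*(C-B) := by
    rw [hd2def, hCdef, hBdef]
    nlinarith [hcB, sq_nonneg (c0*e20+c1*e21)]
  have hd1ne : d1 ≠ 0 := by
    intro h
    rw [h] at hd1sq
    nlinarith [mul_pos hA (by linarith : (0:ℝ) < C - A)]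
  have hd2ne : d2 ≠ 0 := by
    intro h
    rw [h] at hd2sq
    nlinarith [mul_pos hB (by linarith : (0:ℝ) < C - B)]
  -- A*B ≠ (C-A)*(C-B)
  have hABne : A*B ≠ (C-A)*(C-B) := by
    intro hEq
    have hsum : A + B = C := by
      have h0 : C*(A+B-C) = 0 := by linear_combination hEq
      rcases mul_eq_zero.1 h0 with h | h
      · exact absurd h (ne_of_gt hC)
      · linarith
    have hdd : d1^2 = d2^2 := by
      rw [hd1sq, hd2sq, show C-A = B from by linarith, show C-B = A from by linarith]; ring
    have hd12 : d1 = d2 := by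
      have h0 : (d1 - d2)*(d1 + d2) = 0 := by linear_combination hdd
      rcases mul_eq_zero.1 h0 with h | h
      · linarith
      · exfalso; nlinarith
    have hu0 : c0*(e10-e20-c0) + c1*(e11-e21-c1) = 0 := by
      rw [hCdef] at hsum
      rw [hAdef, hBdef] at hsum
      linarith [hcA, hcB]
    have hu1 : c0*(e11-e21-c1) - c1*(e10-e20-c0) = 0 := by
      have h0 : d1 - d2 = 0 := by linarith
      rw [hd1def, hd2def] at h0
      linarith
    have hz0 : (e10-e20-c0) = 0 := by
      have hx : C*(e10-e20-c0) = 0 := by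
        rw [hCdef]; linear_combination c0 * hu0 - c1 * hu1
      rcases mul_eq_zero.1 hx with h | h
      · exact absurd h (ne_of_gt hC)
      · exact h
    have hz1 : (e11-e21-c1) = 0 := by
      have hx : C*(e11-e21-c1) = 0 := by
        rw [hCdef]; linear_combination c1 * hu0 + c0 * hu1
      rcases mul_eq_zero.1 hx with h | h
      · exact absurd h (ne_of_gt hC)
      · exact h
    rw [hz0, hz1] at hne
    norm_num at hne
  -- X*Y > 0
  have hfac : 0 < A*B + (C-A)*(C-B) - 2*(d1*d2) := by
    have h4 : (2*(d1*d2))^2 = 4*(A*B)*((C-A)*(C-B)) := by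
      rw [show (2*(d1*d2))^2 = 4*d1^2*d2^2 from by ring, hd1sq, hd2sq]; ring
    have hABpos : 0 < A*B := mul_pos hA hB
    have hA'B'pos : 0 < (C-A)*(C-B) := mul_pos (by linarith) (by linarith)
    have hsq : (A*B - (C-A)*(C-B))^2 > 0 := by
      have h5 := sub_ne_zero.2 hABne
      positivity
    nlinarith [hside, hsq, h4]
  have expand : (d2*(C-A) - d1*B)*(d1*(C-B) - d2*A)
      = d1*d2*(A*B + (C-A)*(C-B) - 2*(d1*d2)) := by
    linear_combination d2^2*hd1sq + d1^2*hd2sq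
  have hXY : ((d2*(C-A) - d1*B) * (d1*(C-B) - d2*A)) > 0 := by
    rw [expand]; exact mul_pos hside hfac
  have hd1sqpos : 0 < d1^2 := by positivity
  have hXne : d1*(d2*(C-A) - d1*B) ≠ 0 := by
    intro h
    rcases mul_eq_zero.1 h with h | h
    · exact hd1ne h
    · rw [h] at hXY; simp at hXY
  rcases lt_or_gt_of_ne hXne with hXneg | hXpos
  · -- pairing 1
    have hprod : 0 < (d1*(d2*(C-A) - d1*B)) * (d1*(d1*(C-B) - d2*A)) := by
      have : (d1*(d2*(C-A) - d1*B)) * (d1*(d1*(C-B) - d2*A))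
          = d1^2 * ((d2*(C-A) - d1*B) * (d1*(C-B) - d2*A)) := by ring
      rw [this]; exact mul_pos hd1sqpos hXY
    have hYneg : d1*(d1*(C-B) - d2*A) < 0 := by nlinarith
    exact Or.inl (chordSolve c0 c1 e10 e11 e20 e21 hC hA hB hΔid hside hXneg hYneg)
  · -- pairing 2 (swapped)
    have hprod : 0 < (d1*(d2*(C-A) - d1*B)) * (d1*(d1*(C-B) - d2*A)) := by
      have : (d1*(d2*(C-A) - d1*B)) * (d1*(d1*(C-B) - d2*A))
          = d1^2 * ((d2*(C-A) - d1*B) * (d1*(C-B) - d2*A)) := by ring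
      rw [this]; exact mul_pos hd1sqpos hXY
    have hYpos : d1*(d1*(C-B) - d2*A) > 0 := by nlinarith
    -- transfer signs to d2
    have hd2X : 0 < d2*(d2*(C-A) - d1*B) := by
      have h := mul_pos hside hXpos
      have e : d1*d2*(d1*(d2*(C-A) - d1*B)) = d1^2*(d2*(d2*(C-A) - d1*B)) := by ring
      rw [e] at h; exact pos_of_mul_pos_right h hd1sqpos.le
    have hd2Y : 0 < d2*(d1*(C-B) - d2*A) := by
      have h := mul_pos hside hYpos
      have e : d1*d2*(d1*(d1*(C-B) - d2*A)) = d1^2*(d2*(d1*(C-B) - d2*A)) := by ring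
      rw [e] at h; exact pos_of_mul_pos_right h hd1sqpos.le
    have hA2 : (e20+c0)^2+(e21+c1)^2 = C - B := by
      rw [hCdef, hBdef]; linear_combination 2*h2
    have hB2 : (e10-c0)^2+(e11-c1)^2 = C - A := by
      rw [hCdef, hAdef]; linear_combination 2*h1
    refine Or.inr (chordSolve c0 c1 (e20+c0) (e21+c1) (e10-c0) (e11-c1) hC ?_ ?_ ?_ ?_ ?_ ?_)
    · rw [hA2]; linarith
    · rw [hB2]; linarith
    · -- Δ identity for swapped configuration
      have h0 : ((e20+c0)*(e11-c1) - (e21+c1)*(e10-c0))*(c0^2+c1^2)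
          = (c0*(e21+c1)-c1*(e20+c0))*((e10-c0)^2+(e11-c1)^2)
            + (c0*(e11-c1)-c1*(e10-c0))*((e20+c0)^2+(e21+c1)^2) := by
        linear_combination (-(c0*(e11-c1)-c1*(e10-c0)))*h2 + (-(c0*(e21+c1)-c1*(e20+c0)))*h1
      exact h0
    · -- side
      have h0 : (c0*(e21+c1)-c1*(e20+c0))*(c0*(e11-c1)-c1*(e10-c0)) = d1*d2 := by
        rw [hd1def, hd2def]; ring
      rw [h0]; exact hside
    · -- X for swapped
      have h0 : (c0*(e21+c1)-c1*(e20+c0)) *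
          ((c0*(e11-c1)-c1*(e10-c0))*((c0^2+c1^2)-((e20+c0)^2+(e21+c1)^2))
            - (c0*(e21+c1)-c1*(e20+c0))*((e10-c0)^2+(e11-c1)^2))
          = -(d2*(d2*(C-A) - d1*B)) := by
        rw [hA2, hB2, hd1def, hd2def, hCdef, hAdef, hBdef]; ring
      rw [h0]; linarith
    · -- Y for swapped
      have h0 : (c0*(e21+c1)-c1*(e20+c0)) *
          ((c0*(e21+c1)-c1*(e20+c0))*((c0^2+c1^2)-((e10-c0)^2+(e11-c1)^2))
            - (c0*(e11-c1)-c1*(e10-c0))*((e20+c0)^2+(e21+c1)^2))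
          = -(d2*(d1*(C-B) - d2*A)) := by
        rw [hA2, hB2, hd1def, hd2def, hCdef, hAdef, hBdef]; ring
      rw [h0]; linarith

end Aux

set_option maxHeartbeats 1600000 in
/-- In a `b`-bend `β`-restricted RAC drawing `d` of `G`, if `T'` is the
set of vertices whose neighborhood is exactly `{u, v}` and whose (two) incident edges have
no bends in `d`, then at most `4` members of `T'` are involved in crossings with other
members of `T'`. -/
theorem brac_degree_two_self_crossings {V : Type} [Fintype V] [DecidableEq V]
    (G : SimpleGraph V) (b : ℕ) (β : Sym2 V → ℕ) (hβ : ∀ e, β e ≤ 3)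
    (d : PolyRAC G) (hd : d.Restricted b β)
    (u v : V) (huv : u ≠ v)
    (T' : Set V)
    (hT' : T' = {t : V | G.neighborSet t = {u, v} ∧
      ∀ (w : V) (h : G.Adj w t), d.bends w t h = []}) :
    {t ∈ T' | ∃ t' ∈ T', t' ≠ t ∧
      ∃ (w w' : V) (hw : G.Adj w t) (hw' : G.Adj w' t'),
        ∃ s ∈ segList (d.pos w) (d.pos t) (d.bends w t hw),
          ∃ s' ∈ segList (d.pos w') (d.pos t') (d.bends w' t' hw'),
            (SegI s ∩ SegI s').Nonempty}.ncard ≤ 4 := by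
  classical
  set P := d.pos with hPdef
  -- membership facts for T'
  have hmem : ∀ t, t ∈ T' → (G.neighborSet t = {u, v} ∧
      ∀ (w : V) (h : G.Adj w t), d.bends w t h = []) := by
    intro t ht; rw [hT'] at ht; exact ht
  have hadjU : ∀ t, t ∈ T' → G.Adj u t := by
    intro t ht
    have h : u ∈ G.neighborSet t := by
      rw [(hmem t ht).1]; exact Set.mem_insert _ _
    exact (SimpleGraph.mem_neighborSet _ _ _).1 h |>.symm
  have hadjV : ∀ t, t ∈ T' → G.Adj v t := by
    intro t ht
    have h : v ∈ G.neighborSet t := by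
      rw [(hmem t ht).1]; exact Set.mem_insert_iff.2 (Or.inr rfl)
    exact (SimpleGraph.mem_neighborSet _ _ _).1 h |>.symm
  have hneU : ∀ t, t ∈ T' → t ≠ u := fun t ht => (hadjU t ht).ne'
  have hneV : ∀ t, t ∈ T' → t ≠ v := fun t ht => (hadjV t ht).ne'
  have hwmem : ∀ t, t ∈ T' → ∀ w, G.Adj w t → w = u ∨ w = v := by
    intro t ht w hw
    have h : w ∈ G.neighborSet t := (SimpleGraph.mem_neighborSet _ _ _).2 hw.symm
    rw [(hmem t ht).1] at h
    simpa using h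
  have hbends : ∀ t, t ∈ T' → ∀ w (h : G.Adj w t), d.bends w t h = [] :=
    fun t ht => (hmem t ht).2
  have hPne : ∀ x y : V, x ≠ y → P x ≠ P y := by
    intro x y h he; exact h (d.pos_inj he)
  -- Sym2 distinctness
  have hsym : ∀ a b : V, a ∈ T' → b ∈ T' → Sym2.mk u a ≠ Sym2.mk v b := by
    intro a b ha hb h
    rw [Sym2.eq_iff] at h
    rcases h with ⟨h1, _⟩ | ⟨h1, _⟩
    · exact huv h1
    · exact hneU b hb h1.symm
  have hsymSame : ∀ w a b : V, a ≠ b → (w = u ∨ w = v) → a ∈ T' → b ∈ T' →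
      Sym2.mk w a ≠ Sym2.mk w b := by
    intro w a b hab hw ha hb h
    rw [Sym2.eq_iff] at h
    rcases h with ⟨_, h2⟩ | ⟨h1, _⟩
    · exact hab h2
    · rcases hw with rfl | rfl
      · exact hneU b hb h1.symm
      · exact hneV b hb h1.symm
  -- a single-segment edge membership helper
  have hsegmem : ∀ (w t : V) (h : G.Adj w t), t ∈ T' →
      (P w, P t) ∈ segList (P w) (P t) (d.bends w t h) := by
    intro w t h ht
    rw [hbends t ht w h, segList_nil]
    exact List.mem_singleton.2 rfl
  -- RAC for two straight edges (u,a) and (v,b)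
  have hrac : ∀ a b (q : Pt), a ∈ T' → b ∈ T' → q ∈ openSegment ℝ (P u) (P a) →
      q ∈ openSegment ℝ (P v) (P b) → (inner ℝ (P a - P u) (P b - P v) : ℝ) = 0 := by
    intro a b q ha hb hqa hqb
    have h1 := hadjU a ha
    have h2 := hadjV b hb
    exact d.rac u a v b h1 h2 (hsym a b ha hb) (P u, P a) (hsegmem u a h1 ha)
      (P v, P b) (hsegmem v b h2 hb) q (by simpa [SegI] using hqa)
      (by simpa [SegI] using hqb)
  -- Thales: any point on both open segments lies on the circle with diameter [P u, P v]
  have thales : ∀ a b (q : Pt), a ∈ T' → b ∈ T' → q ∈ openSegment ℝ (P u) (P a) →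
      q ∈ openSegment ℝ (P v) (P b) → (inner ℝ (q - P u) (q - P v) : ℝ) = 0 := by
    intro a b q ha hb hqa hqb
    obtain ⟨α, hα0, _, hq1⟩ := openSegment_vsub _ _ _ hqa
    obtain ⟨β, hβ0, _, hq2⟩ := openSegment_vsub _ _ _ hqb
    rw [hq1, hq2, real_inner_smul_left, real_inner_smul_right,
      hrac a b q ha hb hqa hqb]
    ring
  -- two straight edges based at the same vertex of {u,v} cannot cross
  have samebase : ∀ w a b (q : Pt), (w = u ∨ w = v) → a ∈ T' → b ∈ T' → a ≠ b →
      q ∈ openSegment ℝ (P w) (P a) → q ∈ openSegment ℝ (P w) (P b) → False := by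
    intro w a b q hw ha hb hab hqa hqb
    have hwa : G.Adj w a := by rcases hw with rfl | rfl; exacts [hadjU a ha, hadjV a ha]
    have hwb : G.Adj w b := by rcases hw with rfl | rfl; exacts [hadjU b hb, hadjV b hb]
    have hinner := d.rac w a w b hwa hwb (hsymSame w a b hab hw ha hb)
      (P w, P a) (hsegmem w a hwa ha) (P w, P b) (hsegmem w b hwb hb) q
      (by simpa [SegI] using hqa) (by simpa [SegI] using hqb)
    obtain ⟨α, hα0, _, hq1⟩ := openSegment_vsub _ _ _ hqa
    obtain ⟨β, hβ0, _, hq2⟩ := openSegment_vsub _ _ _ hqb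
    have h0 : (inner ℝ (q - P w) (q - P w) : ℝ) = 0 := by
      nth_rewrite 1 [hq1]
      rw [hq2, real_inner_smul_left, real_inner_smul_right]
      simp only at hinner
      rw [hinner]; ring
    have hq0 : q - P w = 0 := inner_self_eq_zero.1 h0
    rw [hq1] at hq0
    rcases smul_eq_zero.1 hq0 with h | h
    · exact absurd h (ne_of_gt hα0)
    · have haw : a = w := d.pos_inj (by rwa [sub_eq_zero] at h)
      rcases hw with rfl | rfl
      · exact hneU a ha haw
      · exact hneV a ha haw
  -- coordinate formula for the Thales inner product, relative to P u
  have hinco : ∀ q : Pt, (inner ℝ (q - P u) (q - P v) : ℝ) =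
      (q 0 - P u 0)*((q 0 - P u 0) - (P v 0 - P u 0)) +
      (q 1 - P u 1)*((q 1 - P u 1) - (P v 1 - P u 1)) := by
    intro q
    rw [inner2, show (q - P u) 0 = q 0 - P u 0 from by simp,
      show (q - P u) 1 = q 1 - P u 1 from by simp,
      show (q - P v) 0 = q 0 - P v 0 from by simp,
      show (q - P v) 1 = q 1 - P v 1 from by simp]
    ring
  have hnormpos : ∀ x y : Pt, x ≠ y → 0 < (x 0 - y 0)^2 + (x 1 - y 1)^2 := by
    intro x y h
    have h0 : (0:ℝ) < inner ℝ (x - y) (x - y) := by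
      rcases lt_or_eq_of_le (real_inner_self_nonneg (x := x - y)) with h' | h'
      · exact h'
      · exact absurd (inner_self_eq_zero.1 h'.symm) (sub_ne_zero.2 h)
    rw [inner2, show (x - y) 0 = x 0 - y 0 from by simp,
      show (x - y) 1 = x 1 - y 1 from by simp] at h0
    nlinarith [h0]
  -- coordinate facts for an event point, u-side
  have epackA : ∀ a b (q : Pt), a ∈ T' → b ∈ T' → q ∈ openSegment ℝ (P u) (P a) →
      q ∈ openSegment ℝ (P v) (P b) →
      ((q 0 - P u 0)*((q 0 - P u 0) - (P v 0 - P u 0)) +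
        (q 1 - P u 1)*((q 1 - P u 1) - (P v 1 - P u 1)) = 0) ∧
      0 < (q 0 - P u 0)^2 + (q 1 - P u 1)^2 ∧
      (q 0 - P u 0)^2 + (q 1 - P u 1)^2 < (P v 0 - P u 0)^2 + (P v 1 - P u 1)^2 := by
    intro a b q ha hb hqa hqb
    have h1 : (q 0 - P u 0)*((q 0 - P u 0) - (P v 0 - P u 0)) +
        (q 1 - P u 1)*((q 1 - P u 1) - (P v 1 - P u 1)) = 0 := by
      rw [← hinco q]; exact thales a b q ha hb hqa hqb
    have hqu : q ≠ P u :=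
      mem_openSegment_ne_left (P u) (P a) q (hPne u a (hneU a ha).symm) hqa
    have hqv : q ≠ P v := by
      intro he
      have h2 : P v ∉ SegI (P u, P a) := d.no_vertex_interior v u a (hadjU a ha) huv.symm
        (Ne.symm (hneV a ha)) (P u, P a) (hsegmem u a (hadjU a ha) ha)
      rw [← he] at h2
      exact h2 (by simpa [SegI] using hqa)
    have hApos := hnormpos q (P u) hqu
    have hA'pos := hnormpos q (P v) hqv
    refine ⟨h1, hApos, ?_⟩
    nlinarith [h1, hA'pos]
  -- coordinate facts for an event point, v-side
  have epackB : ∀ a b (q : Pt), a ∈ T' → b ∈ T' → q ∈ openSegment ℝ (P u) (P a) →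
      q ∈ openSegment ℝ (P v) (P b) →
      (((q 0 - P v 0) + (P v 0 - P u 0))*(q 0 - P v 0) +
        ((q 1 - P v 1) + (P v 1 - P u 1))*(q 1 - P v 1) = 0) ∧
      0 < (q 0 - P v 0)^2 + (q 1 - P v 1)^2 ∧
      (q 0 - P v 0)^2 + (q 1 - P v 1)^2 < (P v 0 - P u 0)^2 + (P v 1 - P u 1)^2 := by
    intro a b q ha hb hqa hqb
    have h0 := thales a b q ha hb hqa hqb
    rw [hinco q] at h0
    have h1 : ((q 0 - P v 0) + (P v 0 - P u 0))*(q 0 - P v 0) +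
        ((q 1 - P v 1) + (P v 1 - P u 1))*(q 1 - P v 1) = 0 := by
      linear_combination h0
    have hqv : q ≠ P v :=
      mem_openSegment_ne_left (P v) (P b) q (hPne v b (hneV b hb).symm) hqb
    have hqu : q ≠ P u := by
      intro he
      have h2 : P u ∉ SegI (P v, P b) := d.no_vertex_interior u v b (hadjV b hb) huv
        (Ne.symm (hneU b hb)) (P v, P b) (hsegmem v b (hadjV b hb) hb)
      rw [← he] at h2
      exact h2 (by simpa [SegI] using hqb)
    have hBpos := hnormpos q (P v) hqv
    have hB'pos := hnormpos q (P u) hqu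
    refine ⟨h1, hBpos, ?_⟩
    nlinarith [h1, hB'pos]
  -- the signed side of an event point w.r.t. the line (P u, P v)
  have evsgn : ∀ a b (q : Pt), a ∈ T' → b ∈ T' → q ∈ openSegment ℝ (P u) (P a) →
      q ∈ openSegment ℝ (P v) (P b) →
      (P v 0 - P u 0)*(q 1 - P u 1) - (P v 1 - P u 1)*(q 0 - P u 0) ≠ 0 := by
    intro a b q ha hb hqa hqb h0
    obtain ⟨h1, hApos, hA'⟩ := epackA a b q ha hb hqa hqb
    have hid : ((P v 0 - P u 0)*(q 1 - P u 1) - (P v 1 - P u 1)*(q 0 - P u 0))^2 +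
        ((P v 0 - P u 0)*(q 0 - P u 0) + (P v 1 - P u 1)*(q 1 - P u 1))^2 =
        ((P v 0 - P u 0)^2 + (P v 1 - P u 1)^2)*((q 0 - P u 0)^2 + (q 1 - P u 1)^2) := by
      ring
    rw [h0] at hid
    nlinarith [h1, hApos, hA', hid]
  -- final contradiction from an interior crossing point of two chords
  have finwrap : ∀ a b (q1 q2 : Pt) (s r : ℝ), a ∈ T' → b ∈ T' →
      q1 ∈ openSegment ℝ (P u) (P a) → q2 ∈ openSegment ℝ (P v) (P b) →
      (inner ℝ (q1 - P u) (q1 - P v) : ℝ) = 0 →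
      0 < s → s < 1 → 0 < r → r < 1 →
      s*(q1 0 - P u 0) = (P v 0 - P u 0) + r*(q2 0 - P v 0) →
      s*(q1 1 - P u 1) = (P v 1 - P u 1) + r*(q2 1 - P v 1) → False := by
    intro a b q1 q2 s r ha hb hq1a hq2b hcirc hs0 hs1 hr0 hr1 he0 he1
    set z : Pt := P u + s • (q1 - P u) with hzdef
    have hz2 : z = P v + r • (q2 - P v) := by
      ext i
      fin_cases i
      · have ha1 : z 0 = P u 0 + s * (q1 0 - P u 0) := by rw [hzdef]; simp
        have ha2 : (P v + r • (q2 - P v)) 0 = P v 0 + r * (q2 0 - P v 0) := by simp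
        show z 0 = (P v + r • (q2 - P v)) 0
        rw [ha1, ha2]; linarith [he0]
      · have ha1 : z 1 = P u 1 + s * (q1 1 - P u 1) := by rw [hzdef]; simp
        have ha2 : (P v + r • (q2 - P v)) 1 = P v 1 + r * (q2 1 - P v 1) := by simp
        show z 1 = (P v + r • (q2 - P v)) 1
        rw [ha1, ha2]; linarith [he1]
    have hza : z ∈ openSegment ℝ (P u) (P a) := subSeg (P u) (P a) q1 s hq1a hs0 hs1
    have hzb : z ∈ openSegment ℝ (P v) (P b) := by
      rw [hz2]; exact subSeg (P v) (P b) q2 r hq2b hr0 hr1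
    have hzt := thales a b z ha hb hza hzb
    rw [hinco z] at hzt
    have hz0c : z 0 - P u 0 = s * (q1 0 - P u 0) := by rw [hzdef]; simp
    have hz1c : z 1 - P u 1 = s * (q1 1 - P u 1) := by rw [hzdef]; simp
    rw [hz0c, hz1c] at hzt
    have hcirc' := hcirc
    rw [hinco q1] at hcirc'
    have hq1u : q1 ≠ P u :=
      mem_openSegment_ne_left (P u) (P a) q1 (hPne u a (hneU a ha).symm) hq1a
    have hApos := hnormpos q1 (P u) hq1u
    have hfin : s*(1-s)*((q1 0 - P u 0)^2 + (q1 1 - P u 1)^2) = 0 := by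
      linear_combination (-1)*hzt + s*hcirc'
    nlinarith [hfin, mul_pos (mul_pos hs0 (by linarith : (0:ℝ) < 1 - s)) hApos]
  -- two events with distinct crossing points lie on opposite sides
  have evopp : ∀ a b a' b' (q q' : Pt), a ∈ T' → b ∈ T' → a' ∈ T' → b' ∈ T' →
      q ∈ openSegment ℝ (P u) (P a) → q ∈ openSegment ℝ (P v) (P b) →
      q' ∈ openSegment ℝ (P u) (P a') → q' ∈ openSegment ℝ (P v) (P b') →
      q ≠ q' →
      ((P v 0 - P u 0)*(q 1 - P u 1) - (P v 1 - P u 1)*(q 0 - P u 0)) *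
      ((P v 0 - P u 0)*(q' 1 - P u 1) - (P v 1 - P u 1)*(q' 0 - P u 0)) < 0 := by
    intro a b a' b' q q' ha hb ha' hb' hqa hqb hq'a hq'b hqq
    by_contra hge
    push_neg at hge
    have hsg1 := evsgn a b q ha hb hqa hqb
    have hsg2 := evsgn a' b' q' ha' hb' hq'a hq'b
    have hpos : 0 < ((P v 0 - P u 0)*(q 1 - P u 1) - (P v 1 - P u 1)*(q 0 - P u 0)) *
        ((P v 0 - P u 0)*(q' 1 - P u 1) - (P v 1 - P u 1)*(q' 0 - P u 0)) :=
      lt_of_le_of_ne hge (Ne.symm (mul_ne_zero hsg1 hsg2))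
    obtain ⟨h1, hApos, hA'⟩ := epackA a b q ha hb hqa hqb
    obtain ⟨h2, hBpos, hB'⟩ := epackB a' b' q' ha' hb' hq'a hq'b
    have hneq : (0:ℝ) < ((q 0 - P u 0) - (q' 0 - P v 0) - (P v 0 - P u 0))^2 +
        ((q 1 - P u 1) - (q' 1 - P v 1) - (P v 1 - P u 1))^2 := by
      have hd := hnormpos q q' hqq
      have hexp0 : (q 0 - P u 0) - (q' 0 - P v 0) - (P v 0 - P u 0) = q 0 - q' 0 := by ring
      have hexp1 : (q 1 - P u 1) - (q' 1 - P v 1) - (P v 1 - P u 1) = q 1 - q' 1 := by ring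
      rw [hexp0, hexp1]
      exact hd
    have hside : ((P v 0 - P u 0)*(q 1 - P u 1) - (P v 1 - P u 1)*(q 0 - P u 0)) *
        ((P v 0 - P u 0)*(q' 1 - P v 1) - (P v 1 - P u 1)*(q' 0 - P v 0)) > 0 := by
      have hexp : ((P v 0 - P u 0)*(q 1 - P u 1) - (P v 1 - P u 1)*(q 0 - P u 0)) *
          ((P v 0 - P u 0)*(q' 1 - P v 1) - (P v 1 - P u 1)*(q' 0 - P v 0)) =
          ((P v 0 - P u 0)*(q 1 - P u 1) - (P v 1 - P u 1)*(q 0 - P u 0)) *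
          ((P v 0 - P u 0)*(q' 1 - P u 1) - (P v 1 - P u 1)*(q' 0 - P u 0)) := by ring
      rw [hexp]
      exact hpos
    have hcc := chordCross (P v 0 - P u 0) (P v 1 - P u 1)
      (q 0 - P u 0) (q 1 - P u 1) (q' 0 - P v 0) (q' 1 - P v 1)
      hApos hA' hBpos hB' h1 h2 hneq hside
    rcases hcc with ⟨s, r, hs0, hs1', hr0, hr1, he0, he1⟩ |
      ⟨s, r, hs0, hs1', hr0, hr1, he0, he1⟩
    · exact finwrap a b' q q' s r ha hb' hqa hq'b (thales a b q ha hb hqa hqb)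
        hs0 hs1' hr0 hr1 (by linarith [he0]) (by linarith [he1])
    · exact finwrap a' b q' q s r ha' hb hq'a hqb (thales a' b' q' ha' hb' hq'a hq'b)
        hs0 hs1' hr0 hr1 (by linarith [he0]) (by linarith [he1])
  -- events
  set EvP : V × V → Prop := fun p => p.1 ∈ T' ∧ p.2 ∈ T' ∧ p.1 ≠ p.2 ∧
      ∃ q : Pt, q ∈ openSegment ℝ (P u) (P p.1) ∧ q ∈ openSegment ℝ (P v) (P p.2)
    with hEvP
  -- each member of the crossing set belongs to some event
  have getev : ∀ t, t ∈ {t ∈ T' | ∃ t' ∈ T', t' ≠ t ∧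
      ∃ (w w' : V) (hw : G.Adj w t) (hw' : G.Adj w' t'),
        ∃ s ∈ segList (P w) (P t) (d.bends w t hw),
          ∃ s' ∈ segList (P w') (P t') (d.bends w' t' hw'),
            (SegI s ∩ SegI s').Nonempty} →
      ∃ p : V × V, EvP p ∧ (t = p.1 ∨ t = p.2) := by
    intro t ht
    obtain ⟨htT, t', ht'T, htt', w, w', hw, hw', s, hs, s', hs', hcross⟩ := ht
    obtain ⟨q, hq, hq'⟩ := hcross
    rw [hbends t htT w hw, segList_nil, List.mem_singleton] at hs
    rw [hbends t' ht'T w' hw', segList_nil, List.mem_singleton] at hs'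
    subst hs; subst hs'
    simp only [SegI] at hq hq'
    have hwuv := hwmem t htT w hw
    have hw'uv := hwmem t' ht'T w' hw'
    rw [hEvP]
    rcases hwuv with hwu | hwv <;> rcases hw'uv with hw'u | hw'v
    · exact absurd (samebase w t t' q (Or.inl hwu) htT ht'T (Ne.symm htt')
        hq (by rw [hw'u, ← hwu] at hq'; exact hq')) id
    · rw [hwu] at hq; rw [hw'v] at hq'
      exact ⟨(t, t'), ⟨htT, ht'T, Ne.symm htt', q, hq, hq'⟩, Or.inl rfl⟩
    · rw [hwv] at hq; rw [hw'u] at hq'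
      exact ⟨(t', t), ⟨ht'T, htT, htt', q, hq', hq⟩, Or.inr rfl⟩
    · exact absurd (samebase w t t' q (Or.inr hwv) htT ht'T (Ne.symm htt')
        hq (by rw [hw'v, ← hwv] at hq'; exact hq')) id
  -- at most two events up to identification
  have three : ∀ p1 p2 p3 : V × V, EvP p1 → EvP p2 → EvP p3 →
      p1 ≠ p2 → p1 ≠ p3 → p2 ≠ p3 → False := by
    intro p1 p2 p3 hp1 hp2 hp3 h12 h13 h23
    rw [hEvP] at hp1 hp2 hp3
    obtain ⟨h1a, h1b, h1ne, q1, hq1a, hq1b⟩ := hp1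
    obtain ⟨h2a, h2b, h2ne, q2, hq2a, hq2b⟩ := hp2
    obtain ⟨h3a, h3b, h3ne, q3, hq3a, hq3b⟩ := hp3
    have hqdist : ∀ (pa pb : V × V) (qa qb : Pt), pa.1 ∈ T' → pa.2 ∈ T' → pb.1 ∈ T' →
        pb.2 ∈ T' → pa ≠ pb →
        qa ∈ openSegment ℝ (P u) (P pa.1) → qa ∈ openSegment ℝ (P v) (P pa.2) →
        qb ∈ openSegment ℝ (P u) (P pb.1) → qb ∈ openSegment ℝ (P v) (P pb.2) →
        qa ≠ qb := by
      intro pa pb qa qb haa hab hba hbb hpne hqaa hqab hqba hqbb he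
      subst he
      by_cases hfst : pa.1 = pb.1
      · have hsnd : pa.2 ≠ pb.2 := by
          intro h2; exact hpne (Prod.ext hfst h2)
        exact samebase v pa.2 pb.2 qa (Or.inr rfl) hab hbb hsnd hqab hqbb
      · exact samebase u pa.1 pb.1 qa (Or.inl rfl) haa hba hfst hqaa hqba
    have h12' := evopp p1.1 p1.2 p2.1 p2.2 q1 q2 h1a h1b h2a h2b hq1a hq1b hq2a hq2b
      (hqdist p1 p2 q1 q2 h1a h1b h2a h2b h12 hq1a hq1b hq2a hq2b)
    have h13' := evopp p1.1 p1.2 p3.1 p3.2 q1 q3 h1a h1b h3a h3b hq1a hq1b hq3a hq3b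
      (hqdist p1 p3 q1 q3 h1a h1b h3a h3b h13 hq1a hq1b hq3a hq3b)
    have h23' := evopp p2.1 p2.2 p3.1 p3.2 q2 q3 h2a h2b h3a h3b hq2a hq2b hq3a hq3b
      (hqdist p2 p3 q2 q3 h2a h2b h3a h3b h23 hq2a hq2b hq3a hq3b)
    have key : ∀ x y z : ℝ, x*y < 0 → x*z < 0 → y*z < 0 → False := by
      intro x y z hxy hxz hyz
      nlinarith [mul_pos_of_neg_of_neg hxy hxz, sq_nonneg x, hyz]
    exact key _ _ _ h12' h13' h23'
  have two : ∃ p1 p2 : V × V, ∀ p, EvP p → p = p1 ∨ p = p2 := by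
    by_cases h : ∃ p, EvP p
    · obtain ⟨p1, hp1⟩ := h
      by_cases h2 : ∃ p, EvP p ∧ p ≠ p1
      · obtain ⟨p2, hp2, hp2ne⟩ := h2
        refine ⟨p1, p2, fun p hp => ?_⟩
        by_contra hc
        push_neg at hc
        exact three p p1 p2 hp hp1 hp2 hc.1 hc.2 (Ne.symm hp2ne)
      · push_neg at h2
        exact ⟨p1, p1, fun p hp => Or.inl (h2 p hp)⟩
    · push_neg at h
      exact ⟨(u, u), (u, u), fun p hp => absurd hp (h p)⟩
  obtain ⟨p1, p2, hcover⟩ := two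
  have hsub : {t ∈ T' | ∃ t' ∈ T', t' ≠ t ∧
      ∃ (w w' : V) (hw : G.Adj w t) (hw' : G.Adj w' t'),
        ∃ s ∈ segList (P w) (P t) (d.bends w t hw),
          ∃ s' ∈ segList (P w') (P t') (d.bends w' t' hw'),
            (SegI s ∩ SegI s').Nonempty} ⊆
      ({p1.1, p1.2, p2.1, p2.2} : Set V) := by
    intro t ht
    obtain ⟨p, hp, hor⟩ := getev t ht
    rcases hcover p hp with rfl | rfl <;> rcases hor with rfl | rfl <;> simp
  refine le_trans (Set.ncard_le_ncard hsub (Set.toFinite _)) ?_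
  have h1 := Set.ncard_insert_le p1.1 ({p1.2, p2.1, p2.2} : Set V)
  have h2 := Set.ncard_insert_le p1.2 ({p2.1, p2.2} : Set V)
  have h3 := Set.ncard_insert_le p2.1 ({p2.2} : Set V)
  have h4 : ({p2.2} : Set V).ncard = 1 := Set.ncard_singleton _
  omega
end

section
/- Let G be a finite simple graph, b ∈ ℕ, β : E(G) → {0,1,2,3}, and let v be a vertex of G with degree exactly one. Then G admits a b-bend β-restricted RAC drawing if and only if the induced subgraph G − v admits a b-bend β′-restricted RAC drawing, where β′ is the restriction of β to the edges of G − v. -/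
lemma isClosed_seg (a b : Pt) : IsClosed (segment ℝ a b) := by
  rw [segment_eq_image']
  exact (isCompact_Icc.image (by fun_prop)).isClosed

lemma sub_mem_span_seg {a b x y : Pt} (hx : x ∈ segment ℝ a b) (hy : y ∈ segment ℝ a b) :
    x - y ∈ Submodule.span ℝ {b - a} := by
  rw [segment_eq_image'] at hx hy
  obtain ⟨s, _, rfl⟩ := hx; obtain ⟨t, _, rfl⟩ := hy
  have h : a + s • (b - a) - (a + t • (b - a)) = (s - t) • (b - a) := by
    rw [sub_smul]; abel
  rw [h]
  exact Submodule.smul_mem _ _ (Submodule.mem_span_singleton_self _)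

lemma exists_unit_notin_spans (D : Set Pt) (hD : D.Finite) :
    ∃ u : Pt, ‖u‖ = 1 ∧ ∀ d ∈ D, u ∉ Submodule.span ℝ {d} := by
  classical
  set vec : ℝ → Pt := fun t => (WithLp.equiv 2 (Fin 2 → ℝ)).symm ![1, t] with hvec
  have hsub : ∀ d : Pt, {t : ℝ | vec t ∈ Submodule.span ℝ {d}}.Subsingleton := by
    intro d t ht t' ht'
    rw [Set.mem_setOf_eq, Submodule.mem_span_singleton] at ht ht'
    obtain ⟨c, hc⟩ := ht; obtain ⟨c', hc'⟩ := ht'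
    have h0 : 1 = c * d 0 := by simpa [vec] using congrArg (fun x : Pt => x 0) hc.symm
    have h0' : 1 = c' * d 0 := by simpa [vec] using congrArg (fun x : Pt => x 0) hc'.symm
    have h1 : t = c * d 1 := by simpa [vec] using congrArg (fun x : Pt => x 1) hc.symm
    have h1' : t' = c' * d 1 := by simpa [vec] using congrArg (fun x : Pt => x 1) hc'.symm
    have hd0 : d 0 ≠ 0 := fun h => by rw [h, mul_zero] at h0; exact one_ne_zero h0
    have hcc : c = c' := mul_right_cancel₀ hd0 (h0.symm.trans h0')
    rw [h1, h1', hcc]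
  have hbadfin : (⋃ d ∈ D, {t : ℝ | vec t ∈ Submodule.span ℝ {d}}).Finite :=
    Set.Finite.biUnion hD fun d _ => (hsub d).finite
  obtain ⟨t, ht⟩ := hbadfin.infinite_compl.nonempty
  simp only [Set.mem_compl_iff, Set.mem_iUnion, not_exists] at ht
  have hmem : ∀ d ∈ D, vec t ∉ Submodule.span ℝ {d} := fun d hd hm => ht d hd hm
  have hne : vec t ≠ 0 := by
    intro h
    simpa [vec] using congrArg (fun x : Pt => x 0) h
  refine ⟨‖vec t‖⁻¹ • vec t, norm_smul_inv_norm hne, fun d hd hm => hmem d hd ?_⟩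
  have h2 : ‖vec t‖ • (‖vec t‖⁻¹ • vec t) ∈ Submodule.span ℝ {d} := Submodule.smul_mem _ _ hm
  rwa [smul_inv_smul₀ (norm_ne_zero_iff.mpr hne)] at h2

lemma subtype_sym2_ne {α : Type*} {p : α → Prop} {a b c e : Subtype p}
    (h : Sym2.mk a b ≠ Sym2.mk c e) :
    Sym2.mk a.1 b.1 ≠ Sym2.mk c.1 e.1 := by
  intro he; apply h
  rw [Sym2.eq_iff] at he ⊢
  rcases he with ⟨h1, h2⟩ | ⟨h1, h2⟩
  · exact Or.inl ⟨Subtype.ext h1, Subtype.ext h2⟩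
  · exact Or.inr ⟨Subtype.ext h1, Subtype.ext h2⟩

lemma subtype_sym2_ne' {α : Type*} {p : α → Prop} {a b c e : Subtype p}
    (h : Sym2.mk a.1 b.1 ≠ Sym2.mk c.1 e.1) :
    Sym2.mk a b ≠ Sym2.mk c e := by
  intro he; apply h
  rw [Sym2.eq_iff] at he ⊢
  rcases he with ⟨h1, h2⟩ | ⟨h1, h2⟩
  · exact Or.inl ⟨congrArg Subtype.val h1, congrArg Subtype.val h2⟩
  · exact Or.inr ⟨congrArg Subtype.val h1, congrArg Subtype.val h2⟩


theorem fwd_restrict {V : Type} [Fintype V] [DecidableEq V] (G : SimpleGraph V)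
    (b : ℕ) (β : Sym2 V → ℕ) (v : V) :
    AdmitsBRAC G b β →
      AdmitsBRAC (SimpleGraph.comap (Subtype.val : {x : V // x ≠ v} → V) G) b
        (fun e => β (e.map Subtype.val)) := by
  classical
  rintro ⟨d, hlen, count, hc1, hc2, hc3⟩
  refine ⟨{
    pos := fun x => d.pos x.1
    pos_inj := fun a b h => Subtype.ext (d.pos_inj h)
    bends := fun a b h => d.bends a.1 b.1 h
    bends_symm := fun a b h => d.bends_symm a.1 b.1 h
    consec_meet := fun a b h => d.consec_meet a.1 b.1 h
    consec_not_collinear := fun a b h => d.consec_not_collinear a.1 b.1 h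
    nonconsec_disjoint := fun a b h => d.nonconsec_disjoint a.1 b.1 h
    no_vertex_interior := fun w a b h hw1 hw2 =>
      d.no_vertex_interior w.1 a.1 b.1 h (fun he => hw1 (Subtype.ext he))
        (fun he => hw2 (Subtype.ext he))
    rac := fun a b x y h1 h2 hne => d.rac a.1 b.1 x.1 y.1 h1 h2 (subtype_sym2_ne hne) },
    ?_, fun e => count (Sym2.map Subtype.val e), ?_, ?_, ?_⟩
  · intro a b h
    simp only [Sym2.map_pair_eq]
    exact hlen a.1 b.1 h
  · intro a b h
    simp only [Sym2.map_pair_eq]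
    exact hc1 a.1 b.1 h
  · intro e he
    induction e using Sym2.ind with
    | _ a b =>
      refine hc2 _ (fun hmem => he ?_)
      rw [Sym2.map_pair_eq] at hmem
      exact hmem
  · calc ∑ e : Sym2 {x : V // x ≠ v}, count (Sym2.map Subtype.val e)
        = ∑ e ∈ Finset.univ.image (Sym2.map (Subtype.val : {x : V // x ≠ v} → V)), count e := by
          rw [Finset.sum_image (fun a _ b _ h => Sym2.map.injective Subtype.val_injective h)]
      _ ≤ ∑ e : Sym2 V, count e := Finset.sum_le_sum_of_subset (Finset.subset_univ _)
      _ ≤ b := hc3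

theorem bwd_extend {V : Type} [Fintype V] [DecidableEq V] (G : SimpleGraph V)
    (b : ℕ) (β : Sym2 V → ℕ) (v w : V) (hadj : G.Adj v w)
    (huniq : ∀ y, G.Adj v y → y = w) :
    AdmitsBRAC (SimpleGraph.comap (Subtype.val : {x : V // x ≠ v} → V) G) b
        (fun e => β (e.map Subtype.val)) → AdmitsBRAC G b β := by
  classical
  rintro ⟨d, hlen, count, hc1, hc2, hc3⟩
  have hwv : w ≠ v := fun h => G.irrefl (h ▸ hadj)
  set w' : {x : V // x ≠ v} := ⟨w, hwv⟩ with hw'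
  set W : Pt := d.pos w' with hW
  -- edge classification
  have EC : ∀ u₁ u₂, G.Adj u₁ u₂ →
      (u₁ = v ∧ u₂ = w) ∨ (u₂ = v ∧ u₁ = w) ∨ (u₁ ≠ v ∧ u₂ ≠ v) := by
    intro u₁ u₂ h
    by_cases h1 : u₁ = v
    · subst h1; exact Or.inl ⟨rfl, huniq u₂ h⟩
    · by_cases h2 : u₂ = v
      · subst h2; exact Or.inr (Or.inl ⟨rfl, huniq u₁ h.symm⟩)
      · exact Or.inr (Or.inr ⟨h1, h2⟩)
  -- the finite set of segments of the old drawing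
  set Segs : Set (Pt × Pt) := ⋃ (a : {x : V // x ≠ v}) (c : {x : V // x ≠ v}),
      {s | ∃ h : (SimpleGraph.comap (Subtype.val : {x : V // x ≠ v} → V) G).Adj a c, s ∈ segList (d.pos a) (d.pos c) (d.bends a c h)} with hSegs
  have hSegsFin : Segs.Finite := by
    apply Set.finite_iUnion; intro a; apply Set.finite_iUnion; intro c
    by_cases h : (SimpleGraph.comap (Subtype.val : {x : V // x ≠ v} → V) G).Adj a c
    · exact Set.Finite.subset (List.finite_toSet (segList (d.pos a) (d.pos c) (d.bends a c h)))
        (fun s hs => hs.choose_spec)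
    · exact Set.Finite.subset Set.finite_empty (fun s hs => absurd hs.choose h)
  have hSegsMem : ∀ (a c : {x : V // x ≠ v}) (h : (SimpleGraph.comap (Subtype.val : {x : V // x ≠ v} → V) G).Adj a c),
      ∀ s ∈ segList (d.pos a) (d.pos c) (d.bends a c h), s ∈ Segs := by
    intro a c h s hs
    exact Set.mem_iUnion.mpr ⟨a, Set.mem_iUnion.mpr ⟨c, ⟨h, hs⟩⟩⟩
  -- choose a good direction
  obtain ⟨u, hu1, hu⟩ := exists_unit_notin_spans ((fun s : Pt × Pt => s.2 - s.1) '' Segs)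
    (hSegsFin.image _)
  have hu' : ∀ s ∈ Segs, u ∉ Submodule.span ℝ {s.2 - s.1} := fun s hs => hu _ ⟨s, hs, rfl⟩
  -- the minimum relevant distance
  set Bd : Set ℝ := ((fun s => Metric.infDist W (SegC s)) '' {s ∈ Segs | W ∉ SegC s}) ∪
      ((fun x : {x : V // x ≠ v} => dist W (d.pos x)) '' {x | x ≠ w'}) with hBd
  have hBdFin : (insert (1:ℝ) Bd).Finite :=
    Set.Finite.insert _ (Set.Finite.union ((hSegsFin.subset (Set.sep_subset _ _)).image _)
      ((Set.toFinite _).image _))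
  set m : ℝ := sInf (insert 1 Bd) with hm
  have hm_mem : m ∈ insert (1:ℝ) Bd := Set.Nonempty.csInf_mem ⟨1, Set.mem_insert _ _⟩ hBdFin
  have hm_pos : 0 < m := by
    rcases hm_mem with h | h
    · rw [h]; norm_num
    · rcases h with ⟨s, ⟨hs, hWs⟩, heq⟩ | ⟨x, hx, heq⟩
      · rw [← heq]
        exact ((IsClosed.notMem_iff_infDist_pos (isClosed_seg _ _)
          ⟨s.1, left_mem_segment ℝ _ _⟩).mp hWs)
      · rw [← heq]
        exact dist_pos.mpr (fun he => hx (d.pos_inj he.symm))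
  have hm_le : ∀ r ∈ insert (1:ℝ) Bd, m ≤ r := fun r hr => csInf_le hBdFin.bddBelow hr
  set ε : ℝ := m / 2 with hεdef
  have hε : 0 < ε := by positivity
  have hεm : ε < m := by rw [hεdef]; linarith
  set p : Pt := W + ε • u with hp
  -- key exclusion lemmas
  have K1 : ∀ t : ℝ, 0 < t → t < m → ∀ s ∈ Segs, W + t • u ∉ SegC s := by
    intro t ht htm s hs hmem
    by_cases hWs : W ∈ SegC s
    · have hsp : (W + t • u) - W ∈ Submodule.span ℝ {s.2 - s.1} := sub_mem_span_seg hmem hWs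
      rw [add_sub_cancel_left] at hsp
      have : u ∈ Submodule.span ℝ {s.2 - s.1} := by
        have h2 := Submodule.smul_mem _ t⁻¹ hsp
        rwa [inv_smul_smul₀ (ne_of_gt ht)] at h2
      exact hu' s hs this
    · have h1 : Metric.infDist W (SegC s) ≤ dist W (W + t • u) :=
        Metric.infDist_le_dist_of_mem hmem
      have h2 : dist W (W + t • u) = t := by
        rw [dist_comm, dist_self_add_left, norm_smul, hu1, mul_one, Real.norm_eq_abs, abs_of_pos ht]
      have h3 : m ≤ Metric.infDist W (SegC s) :=
        hm_le _ (Set.mem_insert_of_mem _ (Or.inl ⟨s, ⟨hs, hWs⟩, rfl⟩))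
      linarith
  have K2 : ∀ x : {x : V // x ≠ v}, x ≠ w' → ∀ t : ℝ, 0 ≤ t → t < m →
      d.pos x ≠ W + t • u := by
    intro x hx t ht htm heq
    have h3 : m ≤ dist W (d.pos x) := hm_le _ (Set.mem_insert_of_mem _ (Or.inr ⟨x, hx, rfl⟩))
    have h2 : dist W (d.pos x) = t := by
      rw [heq, dist_comm, dist_self_add_left, norm_smul, hu1, mul_one, Real.norm_eq_abs, abs_of_nonneg ht]
    linarith
  have hpW : p ≠ W := by
    intro h
    rw [hp, add_eq_left] at h
    have : ‖ε • u‖ = 0 := by rw [h, norm_zero]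
    rw [norm_smul, hu1, mul_one, Real.norm_eq_abs, abs_of_pos hε] at this
    exact (ne_of_gt hε) this
  have hp_ne : ∀ x : {x : V // x ≠ v}, d.pos x ≠ p := by
    intro x
    by_cases hx : x = w'
    · rw [hx]; exact fun h => hpW h.symm
    · exact fun h => K2 x hx ε (le_of_lt hε) hεm (h.trans hp)
  -- parametrization of the new segment
  have hOpenWp : ∀ x ∈ openSegment ℝ W p, ∃ t, 0 < t ∧ t < ε ∧ x = W + t • u := by
    intro x hx
    rw [openSegment_eq_image'] at hx
    obtain ⟨θ, hθ, rfl⟩ := hx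
    have hpw : p - W = ε • u := by rw [hp]; exact add_sub_cancel_left W (ε • u)
    refine ⟨θ * ε, mul_pos hθ.1 hε, ?_, ?_⟩
    · nlinarith [hθ.2, hε]
    · show W + θ • (p - W) = W + (θ * ε) • u
      rw [hpw, smul_smul]
  -- closed version for the endpoint p itself handled via K1 with t = ε
  -- the extended position and bends functions
  obtain ⟨P, hPv, hPne⟩ : ∃ P : V → Pt, P v = p ∧ ∀ x (h : x ≠ v), P x = d.pos ⟨x, h⟩ :=
    ⟨fun x => if h : x = v then p else d.pos ⟨x, h⟩, dif_pos rfl, fun x h => dif_neg h⟩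
  obtain ⟨B, hBv1, hBv2, hBold⟩ : ∃ B : ∀ u₁ u₂, G.Adj u₁ u₂ → List Pt,
      (∀ u₂ h, B v u₂ h = []) ∧ (∀ u₁ h, B u₁ v h = []) ∧
      (∀ u₁ u₂ (h : G.Adj u₁ u₂) (h1 : u₁ ≠ v) (h2 : u₂ ≠ v),
        B u₁ u₂ h = d.bends ⟨u₁, h1⟩ ⟨u₂, h2⟩ h) := by
    refine ⟨fun u₁ u₂ h => if h1 : u₁ = v then [] else if h2 : u₂ = v then []
      else d.bends ⟨u₁, h1⟩ ⟨u₂, h2⟩ h, fun _ _ => dif_pos rfl, ?_, ?_⟩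
    · intro u₁ h
      by_cases h1 : u₁ = v
      · subst h1; simp
      · simp [h1]
    · intro u₁ u₂ h h1 h2
      simp [h1, h2]
  have hPw : P w = W := hPne w hwv
  have hPinj : Function.Injective P := by
    intro a c hac
    by_cases ha : a = v <;> by_cases hc : c = v
    · rw [ha, hc]
    · rw [ha, hPv, hPne c hc] at hac
      exact absurd hac.symm (hp_ne ⟨c, hc⟩)
    · rw [hc, hPv, hPne a ha] at hac
      exact absurd hac (hp_ne ⟨a, ha⟩)
    · rw [hPne a ha, hPne c hc] at hac
      exact congrArg Subtype.val (d.pos_inj hac)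
  -- segment lists
  have hsegOld : ∀ u₁ u₂ (h : G.Adj u₁ u₂) (h1 : u₁ ≠ v) (h2 : u₂ ≠ v),
      segList (P u₁) (P u₂) (B u₁ u₂ h) =
        segList (d.pos ⟨u₁, h1⟩) (d.pos ⟨u₂, h2⟩) (d.bends ⟨u₁, h1⟩ ⟨u₂, h2⟩ h) := by
    intro u₁ u₂ h h1 h2
    rw [hPne u₁ h1, hPne u₂ h2, hBold u₁ u₂ h h1 h2]
  have hsegVW : ∀ h : G.Adj v w, segList (P v) (P w) (B v w h) = [(p, W)] := by
    intro h; rw [hPv, hPw, hBv1]; rfl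
  have hsegWV : ∀ h : G.Adj w v, segList (P w) (P v) (B w v h) = [(W, p)] := by
    intro h; rw [hPv, hPw, hBv2]; rfl
  have hOldSegs : ∀ u₁ u₂ (h : G.Adj u₁ u₂) (h1 : u₁ ≠ v) (h2 : u₂ ≠ v),
      ∀ s ∈ segList (P u₁) (P u₂) (B u₁ u₂ h), s ∈ Segs := by
    intro u₁ u₂ h h1 h2 s hs
    rw [hsegOld u₁ u₂ h h1 h2] at hs
    exact hSegsMem ⟨u₁, h1⟩ ⟨u₂, h2⟩ h s hs
  -- interior points of the new segment
  have hNewInt : ∀ (s : Pt × Pt), s = (p, W) ∨ s = (W, p) →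
      ∀ q ∈ SegI s, ∃ t, 0 < t ∧ t < ε ∧ q = W + t • u := by
    rintro s (rfl | rfl) q hq
    · refine hOpenWp q ?_
      have : SegI (p, W) = openSegment ℝ W p := openSegment_symm ℝ p W
      rwa [this] at hq
    · exact hOpenWp q hq
  -- a point in the interior of the new segment lies on no old segment
  have hNewOld : ∀ (s : Pt × Pt), s = (p, W) ∨ s = (W, p) →
      ∀ s' ∈ Segs, ∀ q ∈ SegI s, q ∉ SegC s' := by
    intro s hse s' hs' q hq hq'
    obtain ⟨t, ht0, htε, rfl⟩ := hNewInt s hse q hq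
    exact K1 t ht0 (htε.trans hεm) s' hs' hq'
  obtain ⟨D, hDbends⟩ : ∃ D : PolyRAC G, D.bends = B := by
    refine ⟨⟨P, hPinj, B, ?_, ?_, ?_, ?_, ?_, ?_⟩, rfl⟩
    -- bends_symm
    · intro u₁ u₂ h
      rcases EC u₁ u₂ h with ⟨h1, h2⟩ | ⟨h1, h2⟩ | ⟨h1, h2⟩
      · subst h1; subst h2; rw [hBv2, hBv1]; rfl
      · subst h1; subst h2; rw [hBv1, hBv2]; rfl
      · rw [hBold u₂ u₁ h.symm h2 h1, hBold u₁ u₂ h h1 h2]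
        exact d.bends_symm ⟨u₁, h1⟩ ⟨u₂, h2⟩ h
    -- consec_meet
    · intro u₁ u₂ h
      rcases EC u₁ u₂ h with ⟨h1, h2⟩ | ⟨h1, h2⟩ | ⟨h1, h2⟩
      · subst h1; subst h2
        rw [hsegVW h]
        intro i j hij
        have hi := i.isLt; have hj := j.isLt
        simp only [List.length_cons, List.length_nil] at hi hj
        omega
      · subst h1; subst h2
        rw [hsegWV h]
        intro i j hij
        have hi := i.isLt; have hj := j.isLt
        simp only [List.length_cons, List.length_nil] at hi hj
        omega
      · rw [hsegOld u₁ u₂ h h1 h2]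
        exact d.consec_meet ⟨u₁, h1⟩ ⟨u₂, h2⟩ h
    -- consec_not_collinear
    · intro u₁ u₂ h
      rcases EC u₁ u₂ h with ⟨h1, h2⟩ | ⟨h1, h2⟩ | ⟨h1, h2⟩
      · subst h1; subst h2
        rw [hsegVW h]
        intro i j hij
        have hi := i.isLt; have hj := j.isLt
        simp only [List.length_cons, List.length_nil] at hi hj
        omega
      · subst h1; subst h2
        rw [hsegWV h]
        intro i j hij
        have hi := i.isLt; have hj := j.isLt
        simp only [List.length_cons, List.length_nil] at hi hj
        omega
      · rw [hsegOld u₁ u₂ h h1 h2]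
        exact d.consec_not_collinear ⟨u₁, h1⟩ ⟨u₂, h2⟩ h
    -- nonconsec_disjoint
    · intro u₁ u₂ h
      rcases EC u₁ u₂ h with ⟨h1, h2⟩ | ⟨h1, h2⟩ | ⟨h1, h2⟩
      · subst h1; subst h2
        rw [hsegVW h]
        intro i j hij
        have hi := i.isLt; have hj := j.isLt
        simp only [List.length_cons, List.length_nil] at hi hj
        omega
      · subst h1; subst h2
        rw [hsegWV h]
        intro i j hij
        have hi := i.isLt; have hj := j.isLt
        simp only [List.length_cons, List.length_nil] at hi hj
        omega
      · rw [hsegOld u₁ u₂ h h1 h2]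
        exact d.nonconsec_disjoint ⟨u₁, h1⟩ ⟨u₂, h2⟩ h
    -- no_vertex_interior
    · intro x u₁ u₂ h hx1 hx2 s hs
      rcases EC u₁ u₂ h with ⟨h1, h2⟩ | ⟨h1, h2⟩ | ⟨h1, h2⟩
      · subst h1; subst h2
        rw [hsegVW h, List.mem_singleton] at hs
        subst hs
        rw [hPne x hx1]
        intro hmem
        obtain ⟨t, ht0, htε, hteq⟩ := hNewInt (p, W) (Or.inl rfl) _ hmem
        exact K2 ⟨x, hx1⟩ (fun he => hx2 (congrArg Subtype.val he)) t (le_of_lt ht0)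
          (htε.trans hεm) hteq
      · subst h1; subst h2
        rw [hsegWV h, List.mem_singleton] at hs
        subst hs
        rw [hPne x hx2]
        intro hmem
        obtain ⟨t, ht0, htε, hteq⟩ := hNewInt (W, p) (Or.inr rfl) _ hmem
        exact K2 ⟨x, hx2⟩ (fun he => hx1 (congrArg Subtype.val he)) t (le_of_lt ht0)
          (htε.trans hεm) hteq
      · by_cases hxv : x = v
        · subst hxv
          rw [hPv]
          intro hmem
          have hsC : p ∈ SegC s := openSegment_subset_segment ℝ _ _ hmem
          exact K1 ε hε hεm s (hOldSegs u₁ u₂ h h1 h2 s hs) hsC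
        · rw [hPne x hxv]
          rw [hsegOld u₁ u₂ h h1 h2] at hs
          exact d.no_vertex_interior ⟨x, hxv⟩ ⟨u₁, h1⟩ ⟨u₂, h2⟩ h
            (fun he => hx1 (congrArg Subtype.val he))
            (fun he => hx2 (congrArg Subtype.val he)) s hs
    -- rac
    · intro u₁ u₂ x y h₁ h₂ hne s hs s' hs' q hq hq'
      rcases EC u₁ u₂ h₁ with ⟨ha1, ha2⟩ | ⟨ha1, ha2⟩ | ⟨ha1, ha2⟩ <;>
        rcases EC x y h₂ with ⟨hb1, hb2⟩ | ⟨hb1, hb2⟩ | ⟨hb1, hb2⟩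
      -- both new : contradiction with hne
      · subst ha1; subst ha2; subst hb1; subst hb2; exact absurd rfl hne
      · subst ha1; subst ha2; subst hb1; subst hb2; exact absurd Sym2.eq_swap hne
      -- new-old
      · subst ha1; subst ha2
        rw [hsegVW h₁, List.mem_singleton] at hs
        subst hs
        exact absurd (openSegment_subset_segment ℝ _ _ hq')
          (hNewOld _ (Or.inl rfl) s' (hOldSegs x y h₂ hb1 hb2 s' hs') q hq)
      · subst ha1; subst ha2; subst hb1; subst hb2; exact absurd Sym2.eq_swap hne
      · subst ha1; subst ha2; subst hb1; subst hb2; exact absurd rfl hne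
      · subst ha1; subst ha2
        rw [hsegWV h₁, List.mem_singleton] at hs
        subst hs
        exact absurd (openSegment_subset_segment ℝ _ _ hq')
          (hNewOld _ (Or.inr rfl) s' (hOldSegs x y h₂ hb1 hb2 s' hs') q hq)
      -- old-new
      · subst hb1; subst hb2
        rw [hsegVW h₂, List.mem_singleton] at hs'
        subst hs'
        exact absurd (openSegment_subset_segment ℝ _ _ hq)
          (hNewOld _ (Or.inl rfl) s (hOldSegs u₁ u₂ h₁ ha1 ha2 s hs) q hq')
      · subst hb1; subst hb2
        rw [hsegWV h₂, List.mem_singleton] at hs'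
        subst hs'
        exact absurd (openSegment_subset_segment ℝ _ _ hq)
          (hNewOld _ (Or.inr rfl) s (hOldSegs u₁ u₂ h₁ ha1 ha2 s hs) q hq')
      -- old-old
      · rw [hsegOld u₁ u₂ h₁ ha1 ha2] at hs
        rw [hsegOld x y h₂ hb1 hb2] at hs'
        exact d.rac ⟨u₁, ha1⟩ ⟨u₂, ha2⟩ ⟨x, hb1⟩ ⟨y, hb2⟩ h₁ h₂
          (subtype_sym2_ne' hne) s hs s' hs' q hq hq'
  have hmapEdge' : ∀ e' : Sym2 {x : V // x ≠ v}, e' ∈ (SimpleGraph.comap (Subtype.val : {x : V // x ≠ v} → V) G).edgeSet →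
      (Sym2.map Subtype.val e') ∈ G.edgeSet := by
    intro e'
    induction e' using Sym2.ind with
    | _ a c =>
      intro hm
      rw [SimpleGraph.mem_edgeSet] at hm
      rw [Sym2.map_pair_eq, SimpleGraph.mem_edgeSet]
      exact hm
  refine ⟨D, ?_, ?_⟩
  -- Restricted : lengths
  · simp only [hDbends]
    intro u₁ u₂ h
    rcases EC u₁ u₂ h with ⟨h1, h2⟩ | ⟨h1, h2⟩ | ⟨h1, h2⟩
    · subst h1; subst h2; rw [hBv1]; exact Nat.zero_le _
    · subst h1; subst h2; rw [hBv2]; exact Nat.zero_le _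
    · rw [hBold u₁ u₂ h h1 h2]
      have := hlen ⟨u₁, h1⟩ ⟨u₂, h2⟩ h
      simpa [Sym2.map_pair_eq] using this
  -- Restricted : count
  · simp only [hDbends]
    refine ⟨fun e => ∑ e' ∈ Finset.univ.filter
      (fun e' : Sym2 {x : V // x ≠ v} => Sym2.map Subtype.val e' = e), count e', ?_, ?_, ?_⟩
    · intro u₁ u₂ h
      beta_reduce
      rcases EC u₁ u₂ h with ⟨h1, h2⟩ | ⟨h1, h2⟩ | ⟨h1, h2⟩
      · subst h1; subst h2
        rw [hBv1]
        refine Finset.sum_eq_zero ?_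
        intro e' he'
        exfalso
        have hmape := (Finset.mem_filter.mp he').2
        induction e' using Sym2.ind with
        | _ a c =>
          rw [Sym2.map_pair_eq, Sym2.eq_iff] at hmape
          rcases hmape with ⟨hh, _⟩ | ⟨_, hh⟩
          · exact a.2 hh
          · exact c.2 hh
      · subst h1; subst h2
        rw [hBv2]
        refine Finset.sum_eq_zero ?_
        intro e' he'
        exfalso
        have hmape := (Finset.mem_filter.mp he').2
        induction e' using Sym2.ind with
        | _ a c =>
          rw [Sym2.map_pair_eq, Sym2.eq_iff] at hmape
          rcases hmape with ⟨_, hh⟩ | ⟨hh, _⟩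
          · exact c.2 hh
          · exact a.2 hh
      · have hfilter : Finset.univ.filter
            (fun e' : Sym2 {x : V // x ≠ v} => Sym2.map Subtype.val e' = Sym2.mk u₁ u₂) =
            {Sym2.mk ⟨u₁, h1⟩ ⟨u₂, h2⟩} := by
          ext e'
          simp only [Finset.mem_filter, Finset.mem_univ, true_and, Finset.mem_singleton]
          constructor
          · intro he'
            exact Sym2.map.injective Subtype.val_injective
              (he'.trans (Sym2.map_pair_eq Subtype.val ⟨u₁, h1⟩ ⟨u₂, h2⟩).symm)
          · rintro rfl
            rw [Sym2.map_pair_eq]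
        rw [hfilter, Finset.sum_singleton, hc1 ⟨u₁, h1⟩ ⟨u₂, h2⟩ h, hBold u₁ u₂ h h1 h2]
    · intro e he
      beta_reduce
      refine Finset.sum_eq_zero ?_
      intro e' he'
      have hmape := (Finset.mem_filter.mp he').2
      exact hc2 e' (fun hmem => he (hmape ▸ hmapEdge' e' hmem))
    · calc ∑ e : Sym2 V, ∑ e' ∈ Finset.univ.filter
            (fun e' : Sym2 {x : V // x ≠ v} => Sym2.map Subtype.val e' = e), count e'
          = ∑ e' : Sym2 {x : V // x ≠ v}, count e' :=
            Finset.sum_fiberwise_of_maps_to (fun e' _ => Finset.mem_univ _) count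
        _ ≤ b := hc3

/-- If `v` has degree exactly one in `G`, then `G` admits a `b`-bend
`β`-restricted RAC drawing iff the induced subgraph `G - v` admits a `b`-bend
`β'`-restricted one, where `β'` is the restriction of `β`. -/
theorem brac_delete_leaf {V : Type} [Fintype V] [DecidableEq V] (G : SimpleGraph V)
    (b : ℕ) (β : Sym2 V → ℕ) (hβ : ∀ e, β e ≤ 3)
    (v : V) (hv : ∃! w : V, G.Adj v w) :
    AdmitsBRAC G b β ↔
      AdmitsBRAC (SimpleGraph.comap (Subtype.val : {x : V // x ≠ v} → V) G) b
        (fun e => β (e.map Subtype.val)) := by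
  obtain ⟨w, hw, huniq⟩ := hv
  exact ⟨fwd_restrict G b β v, bwd_extend G b β v w hw huniq⟩
end

section
/- Let G be a finite connected simple graph in which every vertex has degree at least 2, and let F be a set of edges of G such that the spanning subgraph G − F is connected and acyclic (i.e., a spanning tree of G). Then the number of vertices of G that are an endpoint of some edge of F or have degree at least 3 in G − F is at most 4|F|. -/
open Finset

/-- If every vertex of a finite connected simple graph `G` has degree at
least `2` and `F` is a set of edges such that `G - F` is a spanning tree of `G`, then the
number of vertices that are an endpoint of an edge of `F` or have degree at least `3` in
`G - F` is at most `4|F|`. -/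
theorem spanning_tree_special_vertices {V : Type} [Fintype V] (G : SimpleGraph V)
    (hconn : G.Connected) (hdeg : ∀ x : V, 2 ≤ (G.neighborSet x).ncard)
    (F : Finset (Sym2 V)) (hF : ↑F ⊆ G.edgeSet)
    (htree : (G.deleteEdges ↑F).IsTree) :
    {w : V | (∃ e ∈ F, w ∈ e) ∨
      3 ≤ ((G.deleteEdges ↑F).neighborSet w).ncard}.ncard ≤ 4 * F.card := by
  classical
  set T := G.deleteEdges ↑F with hT
  haveI : DecidableRel T.Adj := Classical.decRel _
  haveI : DecidableRel G.Adj := Classical.decRel _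
  haveI : DecidableEq V := Classical.decEq _
  have hncard : ∀ (H : SimpleGraph V) [DecidableRel H.Adj] (x : V),
      (H.neighborSet x).ncard = H.degree x := by
    intro H _ x
    rw [← SimpleGraph.card_neighborSet_eq_degree, ← Nat.card_coe_set_eq,
      Nat.card_eq_fintype_card]
  -- V has at least 2 elements
  haveI : Nontrivial V := by
    obtain ⟨v⟩ := hconn.nonempty
    have h2 := hdeg v
    rw [hncard G v] at h2
    have : 0 < G.degree v := by omega
    obtain ⟨u, hu⟩ := (SimpleGraph.degree_pos_iff_exists_adj _ _).mp this
    exact ⟨v, u, (G.ne_of_adj hu)⟩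
  have hcardV : 2 ≤ Fintype.card V := Fintype.one_lt_card
  -- every vertex has positive degree in T
  have hdegT : ∀ v : V, 1 ≤ T.degree v := by
    intro v
    obtain ⟨u, hu⟩ := exists_ne v
    obtain ⟨p⟩ := htree.isConnected.preconnected v u
    rw [show (1 : ℕ) ≤ T.degree v ↔ 0 < T.degree v from Iff.rfl,
      SimpleGraph.degree_pos_iff_exists_adj]
    cases p with
    | nil => exact absurd rfl hu.symm
    | cons h _ => exact ⟨_, h⟩
  -- key finsets
  set EP : Finset V := univ.filter (fun w => ∃ e ∈ F, w ∈ e) with hEP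
  set L : Finset V := univ.filter (fun w => T.degree w ≤ 1) with hL
  set D3 : Finset V := univ.filter (fun w => 3 ≤ T.degree w) with hD3
  -- |EP| ≤ 2|F|
  have hEPcard : EP.card ≤ 2 * F.card := by
    have hsub : EP ⊆ F.biUnion (fun e => {x | x ∈ e}.toFinset) := by
      intro w hw
      rw [hEP, mem_filter] at hw
      obtain ⟨_, e, he, hwe⟩ := hw
      exact mem_biUnion.mpr ⟨e, he, by simp [hwe]⟩
    calc EP.card ≤ _ := card_le_card hsub
      _ ≤ ∑ e ∈ F, ({x | x ∈ e}.toFinset).card := card_biUnion_le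
      _ ≤ ∑ _e ∈ F, 2 := by
          refine sum_le_sum fun e _ => ?_
          induction e with
          | h a b =>
            have : {x | x ∈ s(a, b)}.toFinset = {a, b} := by
              ext x; simp [Sym2.mem_iff]
            rw [this]
            exact (card_insert_le _ _).trans (by simp)
      _ = 2 * F.card := by rw [sum_const, smul_eq_mul, mul_comm]
  -- leaves are endpoints of F
  have hLEP : L ⊆ EP := by
    intro w hw
    rw [hL, mem_filter] at hw
    have hG2 : 2 ≤ G.degree w := by rw [← hncard G w]; exact hdeg w
    have hsub : T.neighborFinset w ⊆ G.neighborFinset w := by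
      intro u hu
      rw [SimpleGraph.mem_neighborFinset] at *
      exact hu.1
    have hss : T.neighborFinset w ⊂ G.neighborFinset w :=
      Finset.ssubset_iff_subset_ne.mpr ⟨hsub, fun h => by
        have := congrArg Finset.card h
        simp only [SimpleGraph.card_neighborFinset_eq_degree] at this
        omega⟩
    obtain ⟨u, huG, huT⟩ := Finset.exists_of_ssubset hss
    rw [SimpleGraph.mem_neighborFinset] at huG huT
    have : s(w, u) ∈ F := by
      by_contra hc
      exact huT (by rw [hT, SimpleGraph.deleteEdges_adj]; exact ⟨huG, hc⟩)
    rw [hEP, mem_filter]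
    exact ⟨mem_univ _, s(w, u), this, by simp⟩
  -- counting in the tree: |D3| + 2 ≤ |L|
  have hedge : T.edgeFinset.card + 1 = Fintype.card V := htree.card_edgeFinset
  have hsum : ∑ v, T.degree v = 2 * T.edgeFinset.card :=
    SimpleGraph.sum_degrees_eq_twice_card_edges T
  have hpoint : ∀ v : V,
      2 + (if 3 ≤ T.degree v then 1 else 0) ≤
        T.degree v + (if T.degree v ≤ 1 then 1 else 0) := by
    intro v
    have := hdegT v
    by_cases h1 : T.degree v ≤ 1 <;> by_cases h3 : 3 ≤ T.degree v <;>
      simp [h1, h3] <;> omega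
  have hsum2 : 2 * Fintype.card V + D3.card ≤ ∑ v, T.degree v + L.card := by
    have := Finset.sum_le_sum (fun v (_ : v ∈ univ) => hpoint v)
    rw [Finset.sum_add_distrib, Finset.sum_add_distrib, sum_const,
      ← Finset.card_filter, ← Finset.card_filter] at this
    simpa [hD3, hL, two_mul, mul_comm] using this
  have hD3L : D3.card + 2 ≤ L.card := by omega
  -- conclude
  have hset : {w : V | (∃ e ∈ F, w ∈ e) ∨ 3 ≤ (T.neighborSet w).ncard}.ncard
      = (univ.filter (fun w => (∃ e ∈ F, w ∈ e) ∨ 3 ≤ T.degree w)).card := by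
    rw [Set.ncard_eq_toFinset_card']
    congr 1
    ext w
    simp [hncard T w]
  rw [hset]
  have hsubS : (univ.filter (fun w => (∃ e ∈ F, w ∈ e) ∨ 3 ≤ T.degree w)) ⊆ EP ∪ D3 := by
    intro w hw
    rw [mem_filter] at hw
    rcases hw.2 with h | h
    · exact mem_union_left _ (by rw [hEP, mem_filter]; exact ⟨mem_univ _, h⟩)
    · exact mem_union_right _ (by rw [hD3, mem_filter]; exact ⟨mem_univ _, h⟩)
  calc _ ≤ (EP ∪ D3).card := card_le_card hsubS
    _ ≤ EP.card + D3.card := card_union_le _ _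
    _ ≤ 4 * F.card := by
        have := card_le_card hLEP
        omega
end

section
/- Let p be a straight-line RAC drawing of a finite simple graph G. Let uv and uv′ be two distinct edges of G sharing the vertex u, and let ab be an edge of G with {a, b} ∩ {u, v, v′} = ∅. Then the segment [p(a), p(b)] cannot intersect the relative interior of [p(u), p(v)] and also intersect the relative interior of [p(u), p(v′)]. -/
noncomputable section

/-- `p` is a straight-line RAC drawing of the simple graph `G`: it is injective, no vertex
lies in the relative interior of a non-incident edge segment, segments of two edges sharing
an endpoint meet only in the image of that shared endpoint, and segments of two edges with
disjoint endpoint sets may only cross in their relative interiors, at a right angle. -/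
def IsSLRAC {V : Type*} (G : SimpleGraph V) (p : V → Pt) : Prop :=
  Function.Injective p ∧
  (∀ w u v : V, G.Adj u v → w ≠ u → w ≠ v → p w ∉ openSegment ℝ (p u) (p v)) ∧
  (∀ u v w : V, G.Adj u v → G.Adj u w → v ≠ w →
    segment ℝ (p u) (p v) ∩ segment ℝ (p u) (p w) ⊆ {p u}) ∧
  (∀ u v x y : V, G.Adj u v → G.Adj x y → u ≠ x → u ≠ y → v ≠ x → v ≠ y →
    ∀ q ∈ segment ℝ (p u) (p v) ∩ segment ℝ (p x) (p y),
      q ∈ openSegment ℝ (p u) (p v) ∧ q ∈ openSegment ℝ (p x) (p y) ∧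
        (inner ℝ (p v - p u) (p y - p x) : ℝ) = 0)

end

/-- In a straight-line RAC drawing `p` of `G`, if `uv` and `uv'` are two
distinct edges sharing the vertex `u` (a fan anchored at `u`) and `ab` is an edge with
`{a, b} ∩ {u, v, v'} = ∅`, then the segment `[p a, p b]` cannot meet the relative interior
of `[p u, p v]` and also meet the relative interior of `[p u, p v']`. -/
theorem slrac_fan_crossing {V : Type} (G : SimpleGraph V) (p : V → Pt)
    (hp : IsSLRAC G p) (u v v' a b : V)
    (h₁ : G.Adj u v) (h₂ : G.Adj u v') (hvv' : v ≠ v')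
    (hab : G.Adj a b)
    (ha : a ∉ ({u, v, v'} : Set V)) (hb : b ∉ ({u, v, v'} : Set V)) :
    ¬ ((segment ℝ (p a) (p b) ∩ openSegment ℝ (p u) (p v)).Nonempty ∧
       (segment ℝ (p a) (p b) ∩ openSegment ℝ (p u) (p v')).Nonempty) := by
  obtain ⟨hinj, hvert, hfan, hrac⟩ := hp
  rintro ⟨⟨q₁, hq₁ab, hq₁uv⟩, ⟨q₂, hq₂ab, hq₂uv'⟩⟩
  simp only [Set.mem_insert_iff, Set.mem_singleton_iff, not_or] at ha hb
  obtain ⟨hau, hav, hav'⟩ := ha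
  obtain ⟨hbu, hbv, hbv'⟩ := hb
  obtain ⟨hq₁o, hq₁ab', hperp1⟩ := hrac u v a b h₁ hab (Ne.symm hau) (Ne.symm hbu)
    (Ne.symm hav) (Ne.symm hbv) q₁ ⟨openSegment_subset_segment ℝ _ _ hq₁uv, hq₁ab⟩
  obtain ⟨hq₂o, hq₂ab', hperp2⟩ := hrac u v' a b h₂ hab (Ne.symm hau) (Ne.symm hbu)
    (Ne.symm hav') (Ne.symm hbv') q₂ ⟨openSegment_subset_segment ℝ _ _ hq₂uv', hq₂ab⟩
  rw [openSegment_eq_image] at hq₁ab' hq₂ab' hq₁uv hq₂uv'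
  obtain ⟨r, hr, hq₁⟩ := hq₁ab'
  obtain ⟨r', hr', hq₂⟩ := hq₂ab'
  obtain ⟨s, hs, hq₁'⟩ := hq₁uv
  obtain ⟨s', hs', hq₂'⟩ := hq₂uv'
  simp only at hq₁ hq₂ hq₁' hq₂'
  have hba : p b - p a ≠ 0 := sub_ne_zero.mpr (fun h => hab.ne (hinj h).symm)
  have key : (r - r') • (p b - p a) = s • (p v - p u) - s' • (p v' - p u) := by
    have e1 : q₁ - q₂ = (r - r') • (p b - p a) := by
      rw [← hq₁, ← hq₂]; module
    have e2 : q₁ - q₂ = s • (p v - p u) - s' • (p v' - p u) := by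
      rw [← hq₁', ← hq₂']; module
    rw [← e1, e2]
  have hinner : (inner ℝ ((r - r') • (p b - p a)) (p b - p a) : ℝ) = 0 := by
    rw [key, inner_sub_left, real_inner_smul_left, real_inner_smul_left, hperp1, hperp2]
    ring
  rw [real_inner_smul_left, real_inner_self_eq_norm_sq] at hinner
  have hrr : r = r' := by
    have := mul_eq_zero.mp hinner
    rcases this with h | h
    · linarith [sub_eq_zero.mp h]
    · exact absurd (pow_eq_zero_iff (n := 2) (by norm_num) |>.mp h) (norm_ne_zero_iff.mpr hba)
  have hq12 : q₁ = q₂ := by rw [← hq₁, ← hq₂, hrr]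
  have hmem : q₁ ∈ segment ℝ (p u) (p v) ∩ segment ℝ (p u) (p v') := by
    refine ⟨openSegment_subset_segment ℝ _ _ ?_, openSegment_subset_segment ℝ _ _ ?_⟩
    · rw [openSegment_eq_image]; exact ⟨s, hs, hq₁'⟩
    · rw [openSegment_eq_image]; exact ⟨s', hs', hq12 ▸ hq₂'⟩
  have hqu : q₁ = p u := hfan u v v' h₁ h₂ hvv' hmem
  have : p u ∈ openSegment ℝ (p u) (p v) := hqu ▸ hq₁o
  rw [left_mem_openSegment_iff] at this
  exact h₁.ne (hinj this)
end
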